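/- arXiv:1602.03106 — 2 statements merged into one kernel-verified Lean document; each statement's English description precedes it below -/
import Mathlib

section
/- Let λ, θ, σ > 0, μ ∈ ℝ, P₀ > 0, and fix c with Φ(c) > 0. Let φ be a strictly positive, strictly convex C² solution of (1/2)σ²φ'' + θ(μ−x)φ' = λφ with φ' < 0. Define Ĝ(x,c) = μΦ(c) + (x−μ)λΦ(c)/(λ+θ), K(x,c) := −(λ/(λ+θ))Φ(c)φ(x) + (Ĝ(x,c) − P₀)φ'(x), and z₀ := P₀/Φ(c). Then K(z₀, c) < 0. (Indeed K(z₀,c) = φ(z₀)Φ(c)[−λ/(λ+θ) + (θ/(λ+θ))(μ−z₀)φ'(z₀)/φ(z₀)], and (μ−z₀)φ'(z₀)/φ(z₀) < λ/θ.) -/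
theorem K_at_z0_neg
    (lam θ σ μ P₀ : ℝ) (hlam : 0 < lam) (hθ : 0 < θ) (hσ : 0 < σ)
    (hP : 0 < P₀)
    (c : ℝ) (Φ : ℝ → ℝ) (hΦc : 0 < Φ c)
    (φ : ℝ → ℝ) (hC2 : ContDiff ℝ 2 φ)
    (hpos : ∀ x, 0 < φ x)
    (hconv : ∀ x, 0 < deriv (deriv φ) x)
    (hdec : ∀ x, deriv φ x < 0)
    (hODE : ∀ x, (1/2) * σ^2 * deriv (deriv φ) x
      + θ * (μ - x) * deriv φ x = lam * φ x)
    (Ghat K : ℝ → ℝ)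
    (hG : ∀ x, Ghat x = μ * Φ c + (x - μ) * (lam * Φ c / (lam + θ)))
    (hK : ∀ x, K x = -(lam / (lam + θ)) * Φ c * φ x + (Ghat x - P₀) * deriv φ x)
    (z₀ : ℝ) (hz : z₀ = P₀ / Φ c) :
    K z₀ < 0 := by
  have hΦne : Φ c ≠ 0 := ne_of_gt hΦc
  have hP0 : z₀ * Φ c = P₀ := by rw [hz]; field_simp
  have hlt : 0 < lam + θ := by linarith
  have h1 := hODE z₀
  have h2 := hconv z₀
  have hσ2 : 0 < σ ^ 2 := by positivity
  rw [hK, hG, ← hP0]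
  have key : -(lam / (lam + θ)) * Φ c * φ z₀
      + (μ * Φ c + (z₀ - μ) * (lam * Φ c / (lam + θ)) - z₀ * Φ c) * deriv φ z₀
      = (Φ c / (lam + θ)) * (-(lam * φ z₀) + θ * (μ - z₀) * deriv φ z₀) := by
    field_simp
    ring
  rw [key]
  have hbr : -(lam * φ z₀) + θ * (μ - z₀) * deriv φ z₀
      = -((1/2) * σ^2 * deriv (deriv φ) z₀) := by linarith
  rw [hbr]
  have : 0 < Φ c / (lam + θ) := div_pos hΦc hlt
  exact mul_neg_of_pos_of_neg this (by nlinarith)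
end

section
/- Let λ, θ > 0, μ > 0, c ∈ [0,1), Φ(c) > 0, P₀ > 0, and φ a strictly positive, strictly convex, strictly decreasing C² solution of (1/2)σ²φ'' + θ(μ−x)φ' = λφ. Suppose x⁰ ∈ ℝ satisfies −P₀ = (1/λ)L(x⁰) where L(x⁰) = [θμ − (λ+θ)x⁰](g − c) − λΦ̄ x⁰ for some constants g ∈ [c,1] and Φ̄ := Φ(g ∨ c) ≥ 0 with (g − c) + λΦ̄/(λ+θ) > 0. Define Ĥ(x) := [x(g−c) + (λ/(λ+θ))Φ̄(x + μθ/λ) − P₀]φ'(x) − [(g−c) + (λ/(λ+θ))Φ̄]φ(x). Then Ĥ(x⁰) = φ(x⁰)·[(θ(μ−x⁰)/λ)·φ'(x⁰)/φ(x⁰) − 1]·[(g−c) + λΦ̄/(λ+θ)] < 0. -/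
theorem Hhat_at_x0_neg
    (lam θ σ μ P₀ : ℝ) (hlam : 0 < lam) (hθ : 0 < θ) (hσ : 0 < σ)
    (hμ : 0 < μ) (hP : 0 < P₀)
    (c : ℝ) (hc : c ∈ Set.Ico (0:ℝ) 1)
    (g Φbar : ℝ) (hg : c ≤ g) (hg1 : g ≤ 1) (hΦbar : 0 ≤ Φbar)
    (hsum : 0 < (g - c) + lam * Φbar / (lam + θ))
    (φ : ℝ → ℝ) (hC2 : ContDiff ℝ 2 φ)
    (hpos : ∀ x, 0 < φ x)
    (hconv : ∀ x, 0 < deriv (deriv φ) x)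
    (hdec : ∀ x, deriv φ x < 0)
    (hODE : ∀ x, (1/2) * σ^2 * deriv (deriv φ) x
      + θ * (μ - x) * deriv φ x = lam * φ x)
    (x0 : ℝ)
    (hx0 : -P₀ = (1 / lam) *
      ((θ * μ - (lam + θ) * x0) * (g - c) - lam * Φbar * x0))
    (Hhat : ℝ → ℝ)
    (hH : ∀ x, Hhat x =
      (x * (g - c) + (lam / (lam + θ)) * Φbar * (x + μ * θ / lam) - P₀)
        * deriv φ x
      - ((g - c) + (lam / (lam + θ)) * Φbar) * φ x) :
    Hhat x0 = φ x0 * ((θ * (μ - x0) / lam) * (deriv φ x0 / φ x0) - 1)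
        * ((g - c) + lam * Φbar / (lam + θ)) ∧
    Hhat x0 < 0 := by
  have hlt : 0 < lam + θ := by linarith
  have hln : lam ≠ 0 := ne_of_gt hlam
  have hltn : lam + θ ≠ 0 := ne_of_gt hlt
  have hφ : φ x0 ≠ 0 := ne_of_gt (hpos x0)
  have hP₀ : P₀ = -((1 / lam) *
      ((θ * μ - (lam + θ) * x0) * (g - c) - lam * Φbar * x0)) := by linarith
  have hid : Hhat x0 = φ x0 * ((θ * (μ - x0) / lam) * (deriv φ x0 / φ x0) - 1)
        * ((g - c) + lam * Φbar / (lam + θ)) := by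
    rw [hH, hP₀]
    field_simp
    ring
  refine ⟨hid, ?_⟩
  rw [hid]
  have hODE0 := hODE x0
  have hpp := hconv x0
  have hneg : θ * (μ - x0) * deriv φ x0 - lam * φ x0 < 0 := by nlinarith [mul_pos (pow_pos hσ 2) hpp]
  have hb : (θ * (μ - x0) / lam) * (deriv φ x0 / φ x0) - 1 < 0 := by
    have h1 : (θ * (μ - x0) / lam) * (deriv φ x0 / φ x0) - 1
        = (θ * (μ - x0) * deriv φ x0 - lam * φ x0) / (lam * φ x0) := by
      field_simp
    rw [h1]
    exact div_neg_of_neg_of_pos hneg (mul_pos hlam (hpos x0))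
  have := mul_neg_of_pos_of_neg (hpos x0) hb
  exact mul_neg_of_neg_of_pos this hsum
end
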